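/- Let Ω ⊂ ℝ³ be bounded, V the divergence-free subspace of (H₀¹(Ω))³, and λ₁ > 0 the smallest eigenvalue of the Stokes operator with Dirichlet boundary conditions on Ω, so that ‖v‖_{L⁴(Ω)} ≤ C_{4,P} ‖∇v‖_{L²} for all v ∈ V with C_{4,P} ≤ (8/9)^{1/4} λ₁^{−1/8}. Then for all v, w, u, ũ ∈ V: |((v·∇)u, ũ) + ((u·∇)v, ũ) − ((w·∇)u, ũ) − ((u·∇)w, ũ)| ≤ 2√3 C_{4,P}² ‖∇(v−w)‖ ‖∇u‖ ‖∇ũ‖, i.e., the Fréchet derivative of the Navier–Stokes nonlinearity is Lipschitz in operator norm with constant G = (4√6/3) λ₁^{−1/4}. -/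

import Mathlib

/-!
Subtracting the two linearizations leaves `(((v - w)·∇)u, ũ) + ((u·∇)(v - w), ũ)`. Pointwise
Cauchy–Schwarz bounds `|((a·∇)b)·c|` by `|a| |∇b| |c|`; Cauchy–Schwarz in `L²`, applied once to
`|a| |c| · |∇b|` and once to `|a|² · |c|²`, then gives `|((a·∇)b, c)| ≤ ‖a‖_{L⁴} ‖c‖_{L⁴} ‖∇b‖`,
and the embedding turns each `L⁴`-norm into `C_{4,P}` times a gradient norm. The difference is
thus bounded by `2 C_{4,P}² ‖∇(v - w)‖ ‖∇u‖ ‖∇ũ‖`, even without the factor `√3`, and squaring the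
bound on `C_{4,P}` gives `2√3 C_{4,P}² ≤ 2√3 · (2√2/3) λ₁^{-1/4} = (4√6/3) λ₁^{-1/4}`.
-/

open MeasureTheory
open scoped RealInnerProductSpace

noncomputable section

/-- Three-dimensional Euclidean space. -/
abbrev E3 := EuclideanSpace ℝ (Fin 3)

/-- `pd u j x` is the partial derivative `∂_j u (x)` of a vector field `u`. -/
def pd (u : E3 → E3) (j : Fin 3) (x : E3) : E3 :=
  fderiv ℝ u x (EuclideanSpace.single j 1)

/-- Pointwise Frobenius product `∇u(x) · ∇v(x)`. -/
def gradDot (u v : E3 → E3) (x : E3) : ℝ := ∑ j, ⟪pd u j x, pd v j x⟫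

/-- Divergence of a vector field. -/
def divg (u : E3 → E3) (x : E3) : ℝ := ∑ j, pd u j x j

/-- Membership in `V = {v ∈ (H₀¹(Ω))³ : div v = 0}` (vector fields vanishing
outside `Ω` and divergence free). -/
def memV (Ω : Set E3) (u : E3 → E3) : Prop :=
  ContDiff ℝ 1 u ∧ (∀ x ∉ Ω, u x = 0) ∧ ∀ x, divg u x = 0

/-- Trilinear convection form `((w·∇)u)·v` at a point. -/
def convf (w u v : E3 → E3) (x : E3) : ℝ := ∑ j, w x j * ⟪pd u j x, v x⟫

/-- `H¹₀`-norm (gradient `L²`-norm) over `Ω`. -/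
def gradNorm (Ω : Set E3) (u : E3 → E3) : ℝ := Real.sqrt (∫ x in Ω, gradDot u u x)

/-- `L⁴`-norm over `Ω`. -/
def l4Norm (Ω : Set E3) (u : E3 → E3) : ℝ := (∫ x in Ω, ‖u x‖ ^ 4) ^ ((1 : ℝ) / 4)

theorem integral_mul_le_sqrt_integral_sq_mul_sqrt_integral_sq {α : Type*} [MeasurableSpace α]
    {μ : Measure α} {f g : α → ℝ} (hf : 0 ≤ᵐ[μ] f) (hg : 0 ≤ᵐ[μ] g) (hf2 : MemLp f 2 μ)
    (hg2 : MemLp g 2 μ) :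
    ∫ x, f x * g x ∂μ ≤ √(∫ x, f x ^ 2 ∂μ) * √(∫ x, g x ^ 2 ∂μ) := by
  have := integral_mul_le_Lp_mul_Lq_of_nonneg Real.HolderConjugate.two_two hf hg
    (by simpa using hf2) (by simpa using hg2)
  simpa only [Real.rpow_two, Real.sqrt_eq_rpow, one_div] using this

section BoundedDomain

variable {X : Type*} [MetricSpace X] [ProperSpace X] [MeasurableSpace X] [OpensMeasurableSpace X]
  {μ : Measure X} [IsFiniteMeasureOnCompacts μ] {s : Set X}

theorem Continuous.integrableOn_of_isBounded {E : Type*} [NormedAddCommGroup E] {f : X → E}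
    (hf : Continuous f) (hs : Bornology.IsBounded s) : IntegrableOn f s μ :=
  (hf.continuousOn.integrableOn_compact hs.isCompact_closure).mono_set subset_closure

theorem Continuous.memLp_two_restrict_of_isBounded {f : X → ℝ} (hf : Continuous f)
    (hs : Bornology.IsBounded s) : MemLp f 2 (μ.restrict s) :=
  (memLp_two_iff_integrable_sq hf.aestronglyMeasurable).2
    ((hf.pow 2).integrableOn_of_isBounded hs)

end BoundedDomain

theorem pd_sub {v w : E3 → E3} {x : E3} (hv : DifferentiableAt ℝ v x)
    (hw : DifferentiableAt ℝ w x) (j : Fin 3) : pd (v - w) j x = pd v j x - pd w j x := by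
  simp [pd, fderiv_sub hv hw]

theorem continuous_pd {u : E3 → E3} (hu : ContDiff ℝ 1 u) (j : Fin 3) :
    Continuous (pd u j) :=
  (hu.continuous_fderiv one_ne_zero).clm_apply continuous_const

theorem memV.sub {Ω : Set E3} {v w : E3 → E3} (hv : memV Ω v) (hw : memV Ω w) :
    memV Ω (v - w) := by
  refine ⟨hv.1.sub hw.1, fun x hx => by simp [hv.2.1 x hx, hw.2.1 x hx], fun x => ?_⟩
  calc divg (v - w) x = divg v x - divg w x := by
        simp [divg, pd_sub (hv.1.differentiable one_ne_zero x) (hw.1.differentiable one_ne_zero x),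
          Finset.sum_sub_distrib]
    _ = 0 := by rw [hv.2.2 x, hw.2.2 x, sub_zero]

theorem gradDot_self_nonneg (b : E3 → E3) (x : E3) : 0 ≤ gradDot b b x :=
  Finset.sum_nonneg fun _ _ => real_inner_self_nonneg

theorem continuous_gradDot {b c : E3 → E3} (hb : ContDiff ℝ 1 b) (hc : ContDiff ℝ 1 c) :
    Continuous (gradDot b c) :=
  continuous_finsetSum _ fun j _ => (continuous_pd hb j).inner (continuous_pd hc j)

theorem continuous_convf {a b c : E3 → E3} (ha : Continuous a) (hb : ContDiff ℝ 1 b)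
    (hc : Continuous c) : Continuous (convf a b c) :=
  continuous_finsetSum _ fun j _ =>
    ((EuclideanSpace.proj j).continuous.comp ha).mul ((continuous_pd hb j).inner hc)

theorem convf_sub_left (v w u c : E3 → E3) : convf (v - w) u c = convf v u c - convf w u c := by
  ext x
  simp [convf, sub_mul, Finset.sum_sub_distrib]

theorem convf_sub_mid {v w : E3 → E3} (hv : Differentiable ℝ v) (hw : Differentiable ℝ w)
    (a c : E3 → E3) : convf a (v - w) c = convf a v c - convf a w c := by
  ext x
  simp [convf, pd_sub (hv x) (hw x), inner_sub_left, mul_sub, Finset.sum_sub_distrib]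

theorem abs_convf_le (a b c : E3 → E3) (x : E3) :
    |convf a b c x| ≤ ‖a x‖ * ‖c x‖ * √(gradDot b b x) := by
  have hinner : ∑ j, ⟪pd b j x, c x⟫ ^ 2 ≤ ‖c x‖ ^ 2 * gradDot b b x := by
    rw [gradDot, Finset.mul_sum]
    refine Finset.sum_le_sum fun j _ => ?_
    rw [real_inner_self_eq_norm_sq, ← mul_pow, mul_comm ‖c x‖, ← sq_abs]
    exact pow_le_pow_left₀ (abs_nonneg _) (abs_real_inner_le_norm _ _) 2
  have hnorm : ‖a x‖ ^ 2 = ∑ j, a x j ^ 2 := by simp [EuclideanSpace.norm_sq_eq]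
  rw [show ‖a x‖ * ‖c x‖ * √(gradDot b b x) = √((‖a x‖ ^ 2) * (‖c x‖ ^ 2 * gradDot b b x)) by
    rw [Real.sqrt_mul (by positivity), Real.sqrt_mul (by positivity), Real.sqrt_sq (norm_nonneg _),
      Real.sqrt_sq (norm_nonneg _), mul_assoc]]
  refine Real.abs_le_sqrt ((Finset.sum_mul_sq_le_sq_mul_sq _ _ _).trans ?_)
  rw [← hnorm]
  gcongr

theorem gradNorm_nonneg (Ω : Set E3) (u : E3 → E3) : 0 ≤ gradNorm Ω u := Real.sqrt_nonneg _

theorem l4Norm_nonneg (Ω : Set E3) (u : E3 → E3) : 0 ≤ l4Norm Ω u :=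
  Real.rpow_nonneg (integral_nonneg fun _ => by positivity) _

theorem l4Norm_eq_sqrt_sqrt (Ω : Set E3) (a : E3 → E3) :
    l4Norm Ω a = √(√(∫ x in Ω, ‖a x‖ ^ 4)) := by
  rw [l4Norm, Real.sqrt_eq_rpow, Real.sqrt_eq_rpow,
    ← Real.rpow_mul (integral_nonneg fun _ => by positivity)]
  norm_num

theorem sqrt_integral_sq_norm_mul_sq_norm_le {Ω : Set E3} (hΩ : Bornology.IsBounded Ω)
    {a c : E3 → E3} (ha : Continuous a) (hc : Continuous c) :
    √(∫ x in Ω, ‖a x‖ ^ 2 * ‖c x‖ ^ 2) ≤ l4Norm Ω a * l4Norm Ω c := by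
  have hCS := integral_mul_le_sqrt_integral_sq_mul_sqrt_integral_sq (μ := volume.restrict Ω)
    (f := fun x => ‖a x‖ ^ 2) (g := fun x => ‖c x‖ ^ 2)
    (ae_of_all _ fun _ => by positivity) (ae_of_all _ fun _ => by positivity)
    ((ha.norm.pow 2).memLp_two_restrict_of_isBounded hΩ)
    ((hc.norm.pow 2).memLp_two_restrict_of_isBounded hΩ)
  simp only [← pow_mul] at hCS
  rw [l4Norm_eq_sqrt_sqrt, l4Norm_eq_sqrt_sqrt, ← Real.sqrt_mul (Real.sqrt_nonneg _)]
  exact Real.sqrt_le_sqrt hCS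

theorem abs_integral_convf_le {Ω : Set E3} (hΩ : Bornology.IsBounded Ω) {a b c : E3 → E3}
    (ha : Continuous a) (hb : ContDiff ℝ 1 b) (hc : Continuous c) :
    |∫ x in Ω, convf a b c x| ≤ l4Norm Ω a * l4Norm Ω c * gradNorm Ω b := by
  have hac := ha.norm.mul hc.norm
  have hG := (continuous_gradDot hb hb).sqrt
  calc |∫ x in Ω, convf a b c x| ≤ ∫ x in Ω, ‖a x‖ * ‖c x‖ * √(gradDot b b x) := by
        rw [← Real.norm_eq_abs]
        exact norm_integral_le_of_norm_le ((hac.mul hG).integrableOn_of_isBounded hΩ)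
          (ae_of_all _ (abs_convf_le a b c))
    _ ≤ √(∫ x in Ω, (‖a x‖ * ‖c x‖) ^ 2) * √(∫ x in Ω, √(gradDot b b x) ^ 2) :=
        integral_mul_le_sqrt_integral_sq_mul_sqrt_integral_sq
          (ae_of_all _ fun _ => by positivity) (ae_of_all _ fun _ => by positivity)
          (hac.memLp_two_restrict_of_isBounded hΩ) (hG.memLp_two_restrict_of_isBounded hΩ)
    _ = √(∫ x in Ω, ‖a x‖ ^ 2 * ‖c x‖ ^ 2) * gradNorm Ω b := by
        simp only [mul_pow, Real.sq_sqrt (gradDot_self_nonneg b _), gradNorm]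
    _ ≤ l4Norm Ω a * l4Norm Ω c * gradNorm Ω b := by
        gcongr
        · exact gradNorm_nonneg Ω b
        · exact sqrt_integral_sq_norm_mul_sq_norm_le hΩ ha hc

theorem abs_integral_convf_le_of_l4Norm_le {Ω : Set E3} (hΩ : Bornology.IsBounded Ω)
    {a b c : E3 → E3} (ha : Continuous a) (hb : ContDiff ℝ 1 b) (hc : Continuous c) {C : ℝ}
    (hCa : l4Norm Ω a ≤ C * gradNorm Ω a) (hCc : l4Norm Ω c ≤ C * gradNorm Ω c) :
    |∫ x in Ω, convf a b c x| ≤ C ^ 2 * (gradNorm Ω a * gradNorm Ω b * gradNorm Ω c) :=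
  calc |∫ x in Ω, convf a b c x| ≤ l4Norm Ω a * l4Norm Ω c * gradNorm Ω b :=
        abs_integral_convf_le hΩ ha hb hc
    _ ≤ C * gradNorm Ω a * (C * gradNorm Ω c) * gradNorm Ω b :=
        mul_le_mul_of_nonneg_right
          (mul_le_mul hCa hCc (l4Norm_nonneg Ω c) ((l4Norm_nonneg Ω a).trans hCa))
          (gradNorm_nonneg Ω b)
    _ = C ^ 2 * (gradNorm Ω a * gradNorm Ω b * gradNorm Ω c) := by ring

theorem integral_convf_sub_eq {Ω : Set E3} (hΩ : Bornology.IsBounded Ω) {v w u ut : E3 → E3}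
    (hv : ContDiff ℝ 1 v) (hw : ContDiff ℝ 1 w) (hu : ContDiff ℝ 1 u) (hut : Continuous ut) :
    (∫ x in Ω, convf v u ut x) + (∫ x in Ω, convf u v ut x)
        - (∫ x in Ω, convf w u ut x) - ∫ x in Ω, convf u w ut x
      = (∫ x in Ω, convf (v - w) u ut x) + ∫ x in Ω, convf u (v - w) ut x := by
  have hint : ∀ {a b : E3 → E3}, Continuous a → ContDiff ℝ 1 b → IntegrableOn (convf a b ut) Ω :=
    fun ha hb => (continuous_convf ha hb hut).integrableOn_of_isBounded hΩ
  rw [convf_sub_left, convf_sub_mid (hv.differentiable one_ne_zero) (hw.differentiable one_ne_zero)]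
  simp only [Pi.sub_apply]
  rw [integral_sub (hint hv.continuous hu) (hint hw.continuous hu),
    integral_sub (hint hu.continuous hv) (hint hu.continuous hw)]
  ring

theorem abs_integral_convf_sub_le {Ω : Set E3} (hΩ : Bornology.IsBounded Ω) {C : ℝ}
    (hemb : ∀ v, memV Ω v → l4Norm Ω v ≤ C * gradNorm Ω v) {v w u ut : E3 → E3}
    (hv : memV Ω v) (hw : memV Ω w) (hu : memV Ω u) (hut : memV Ω ut) :
    |(∫ x in Ω, convf v u ut x) + (∫ x in Ω, convf u v ut x)
        - (∫ x in Ω, convf w u ut x) - ∫ x in Ω, convf u w ut x|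
      ≤ 2 * C ^ 2 * gradNorm Ω (v - w) * gradNorm Ω u * gradNorm Ω ut := by
  have hvw := hv.sub hw
  have h₁ := abs_integral_convf_le_of_l4Norm_le hΩ hvw.1.continuous hu.1 hut.1.continuous
    (hemb _ hvw) (hemb _ hut)
  have h₂ := abs_integral_convf_le_of_l4Norm_le hΩ hu.1.continuous hvw.1 hut.1.continuous
    (hemb _ hu) (hemb _ hut)
  rw [integral_convf_sub_eq hΩ hv.1 hw.1 hu.1 hut.1.continuous]
  calc _ ≤ _ := abs_add_le _ _
    _ ≤ _ := add_le_add h₁ h₂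
    _ = _ := by ring

theorem two_mul_sqrt_three_mul_sq_le {lam C : ℝ} (hlam : 0 < lam) (hC0 : 0 ≤ C)
    (hC : C ≤ (8 / 9 : ℝ) ^ ((1 : ℝ) / 4) * lam ^ (-(1 : ℝ) / 8)) :
    2 * √3 * C ^ 2 ≤ 4 * √6 / 3 * lam ^ (-(1 : ℝ) / 4) := by
  have hsq : C ^ 2 ≤ √(8 / 9) * lam ^ (-(1 : ℝ) / 4) :=
    calc C ^ 2 ≤ ((8 / 9 : ℝ) ^ ((1 : ℝ) / 4) * lam ^ (-(1 : ℝ) / 8)) ^ 2 :=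
          pow_le_pow_left₀ hC0 hC 2
      _ = √(8 / 9) * lam ^ (-(1 : ℝ) / 4) := by
          rw [mul_pow, ← Real.rpow_natCast, ← Real.rpow_natCast, ← Real.rpow_mul (by norm_num),
            ← Real.rpow_mul hlam.le, Real.sqrt_eq_rpow]
          norm_num
  have hconst : 2 * √3 * √(8 / 9) = 4 * √6 / 3 := by
    rw [mul_assoc, ← Real.sqrt_mul (by norm_num),
      show (3 : ℝ) * (8 / 9) = 6 * (2 / 3) ^ 2 by norm_num, Real.sqrt_mul (by norm_num),
      Real.sqrt_sq (by norm_num)]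
    ring
  calc 2 * √3 * C ^ 2 ≤ 2 * √3 * (√(8 / 9) * lam ^ (-(1 : ℝ) / 4)) := by gcongr
    _ = 4 * √6 / 3 * lam ^ (-(1 : ℝ) / 4) := by rw [← hconst]; ring

theorem stmt_8_general (Ω : Set E3) (hΩb : Bornology.IsBounded Ω)
    (lam1 C4P : ℝ) (hlam : 0 < lam1) (hC0 : 0 ≤ C4P)
    (hemb : ∀ v, memV Ω v → l4Norm Ω v ≤ C4P * gradNorm Ω v)
    (hC4P : C4P ≤ (8 / 9 : ℝ) ^ ((1 : ℝ) / 4) * lam1 ^ (-(1 : ℝ) / 8))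
    (v w u ut : E3 → E3)
    (hv : memV Ω v) (hw : memV Ω w) (hu : memV Ω u) (hut : memV Ω ut) :
    |(∫ x in Ω, convf v u ut x) + (∫ x in Ω, convf u v ut x)
        - (∫ x in Ω, convf w u ut x) - ∫ x in Ω, convf u w ut x|
      ≤ 2 * Real.sqrt 3 * C4P ^ 2 * gradNorm Ω (v - w) * gradNorm Ω u * gradNorm Ω ut ∧
    |(∫ x in Ω, convf v u ut x) + (∫ x in Ω, convf u v ut x)
        - (∫ x in Ω, convf w u ut x) - ∫ x in Ω, convf u w ut x|
      ≤ (4 * Real.sqrt 6 / 3) * lam1 ^ (-(1 : ℝ) / 4)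
          * gradNorm Ω (v - w) * gradNorm Ω u * gradNorm Ω ut := by
  have hgvw := gradNorm_nonneg Ω (v - w)
  have hgu := gradNorm_nonneg Ω u
  have hgut := gradNorm_nonneg Ω ut
  have hscale : 2 * C4P ^ 2 ≤ 2 * √3 * C4P ^ 2 :=
    mul_le_mul_of_nonneg_right
      (le_mul_of_one_le_right zero_le_two (Real.one_le_sqrt.mpr (by norm_num))) (sq_nonneg C4P)
  have hfirst : _ ≤ 2 * √3 * C4P ^ 2 * gradNorm Ω (v - w) * gradNorm Ω u * gradNorm Ω ut :=
    (abs_integral_convf_sub_le hΩb hemb hv hw hu hut).trans (by gcongr ?_ * _ * _ * _)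
  exact ⟨hfirst, hfirst.trans <| by
    gcongr ?_ * _ * _ * _
    exact two_mul_sqrt_three_mul_sq_le hlam hC0 hC4P⟩

/-- Lipschitz continuity of the linearized Navier–Stokes convection operator:
with the `L⁴`-embedding constant `C_{4,P} ≤ (8/9)^{1/4} λ₁^{-1/8}`,
`‖N'[v] − N'[w]‖ ≤ 2√3 C_{4,P}² ‖∇(v−w)‖`, giving the Lipschitz
constant `G = (4√6/3) λ₁^{-1/4}`. -/
theorem stmt_8 (Ω : Set E3) (hΩo : IsOpen Ω) (hΩb : Bornology.IsBounded Ω)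
    (lam1 C4P : ℝ) (hlam : 0 < lam1) (hC0 : 0 ≤ C4P)
    (hemb : ∀ v, memV Ω v → l4Norm Ω v ≤ C4P * gradNorm Ω v)
    (hC4P : C4P ≤ (8 / 9 : ℝ) ^ ((1 : ℝ) / 4) * lam1 ^ (-(1 : ℝ) / 8))
    (v w u ut : E3 → E3)
    (hv : memV Ω v) (hw : memV Ω w) (hu : memV Ω u) (hut : memV Ω ut) :
    |(∫ x in Ω, convf v u ut x) + (∫ x in Ω, convf u v ut x)
        - (∫ x in Ω, convf w u ut x) - ∫ x in Ω, convf u w ut x|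
      ≤ 2 * Real.sqrt 3 * C4P ^ 2 * gradNorm Ω (v - w) * gradNorm Ω u * gradNorm Ω ut ∧
    |(∫ x in Ω, convf v u ut x) + (∫ x in Ω, convf u v ut x)
        - (∫ x in Ω, convf w u ut x) - ∫ x in Ω, convf u w ut x|
      ≤ (4 * Real.sqrt 6 / 3) * lam1 ^ (-(1 : ℝ) / 4)
          * gradNorm Ω (v - w) * gradNorm Ω u * gradNorm Ω ut :=
  stmt_8_general Ω hΩb lam1 C4P hlam hC0 hemb hC4P v w u ut hv hw hu hut
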